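/- The scalar field action density expands in terms of the metric components: if G : Ω¹ × Ω¹ → A is biadditive and middle-linear (G(f ▷ m, n) = f·G(m, n), G(m · f, n) = G(m, f ▷ n), and G(m, n · f) = G(m, n)·f for all f ∈ A, m, n ∈ Ω¹), then for every φ ∈ A, pointwise on ℝ: G((d₀ φ)*, d₀ φ) = G(dx, dx)·conj(φ′)·φ′ + G(dx, η)·(conj(φ″)·φ′ + conj(φ′)·φ″), where dx = (1, 0) and η = (0, 1). -/
import Mathlib


open Complex

noncomputable section

/-- The algebra `A = C^∞(ℝ, ℂ)`: we work with plain functions `ℝ → ℂ`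
and carry smoothness as predicates. -/
abbrev A := ℝ → ℂ

/-- Membership in `C^∞(ℝ, ℂ)`. -/
def SmoothFn (f : A) : Prop := ContDiff ℝ (⊤ : ℕ∞) f

/-- One-forms `Ω¹`: the pair `(a, b)` represents `dx·a + η·b`. -/
abbrev Ω1 := A × A

/-- A one-form with smooth components. -/
def SmoothForm (m : Ω1) : Prop := SmoothFn m.1 ∧ SmoothFn m.2

/-- The twisted left action `f ▷ (a, b) = (f·a, f·b + 2·f′·a)`,
encoding `f·dx = dx·f + 2η·f′` and `f·η = η·f`. -/
noncomputable def leftAct (f : A) (m : Ω1) : Ω1 :=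
  (f * m.1, f * m.2 + 2 * deriv f * m.1)

/-- The right action `(a, b)·g = (a·g, b·g)`. -/
def rightAct (m : Ω1) (g : A) : Ω1 := (m.1 * g, m.2 * g)

/-- The exterior derivative `d₀ f = (f′, f″)`, i.e. `df = dx·f′ + η·f″`. -/
noncomputable def d0 (f : A) : Ω1 := (deriv f, deriv (deriv f))

/-- Two-forms `Ω²`: the pair `(u, v)` represents `dx•dx·u + dx•η·v`. -/
abbrev Ω2 := A × A

/-- The product of one-forms `(a, b) • (c, d) = (a·c, 2·a′·c + a·d − b·c)`,
induced by `η•η = 0` and `η•dx = −dx•η`. -/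
noncomputable def wedge (m n : Ω1) : Ω2 :=
  (m.1 * n.1, 2 * deriv m.1 * n.1 + m.1 * n.2 - m.2 * n.1)

/-- The derivative on one-forms, `d₁(a, b) = (b − a′, b′ − a″)`. -/
noncomputable def d1 (m : Ω1) : Ω2 :=
  (m.2 - deriv m.1, deriv m.2 - deriv (deriv m.1))

/-- Pointwise complex conjugation on `A`. -/
noncomputable def conjA (f : A) : A := fun x => (starRingEnd ℂ) (f x)

/-- The conjugation on `Ω¹`: `(a, b)* = (conj a, 2·(conj a)′ − conj b)`,
encoding `dx* = dx`, `η* = −η`. -/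
noncomputable def star1 (m : Ω1) : Ω1 :=
  (conjA m.1, 2 * deriv (conjA m.1) - conjA m.2)

/-- The conjugation on `Ω²` is componentwise. -/
noncomputable def star2 (w : Ω2) : Ω2 := (conjA w.1, conjA w.2)

/-- The one-form `dx = (1, 0)`. -/
def dxF : Ω1 := (1, 0)

/-- The one-form `η = (0, 1)`. -/
def etaF : Ω1 := (0, 1)

set_option linter.unusedSectionVars false

-- auxiliary lemmas

lemma sf_deriv {f : A} (hf : SmoothFn f) : SmoothFn (deriv f) :=
  (contDiff_infty_iff_deriv.mp hf).2

lemma sf_conj {f : A} (hf : SmoothFn f) : SmoothFn (conjA f) :=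
  Complex.conjCLE.contDiff.comp hf

lemma deriv_conjA (f : A) : deriv (conjA f) = conjA (deriv f) := by
  funext x
  exact deriv.star

lemma sf_const (c : ℂ) : SmoothFn (fun _ : ℝ => c) := contDiff_const

lemma sf_one : SmoothFn (1 : A) := contDiff_const
lemma sf_zero : SmoothFn (0 : A) := contDiff_const
lemma sf_two : SmoothFn (2 : A) := contDiff_const

lemma sf_mul {f g : A} (hf : SmoothFn f) (hg : SmoothFn g) : SmoothFn (f * g) :=
  ContDiff.mul hf hg

lemma sf_add {f g : A} (hf : SmoothFn f) (hg : SmoothFn g) : SmoothFn (f + g) :=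
  ContDiff.add hf hg

lemma smf {a b : A} (ha : SmoothFn a) (hb : SmoothFn b) : SmoothForm (a, b) := ⟨ha, hb⟩

lemma smf_dx : SmoothForm dxF := ⟨sf_one, sf_zero⟩
lemma smf_eta : SmoothForm etaF := ⟨sf_zero, sf_one⟩

lemma sf_idC : SmoothFn (fun x : ℝ => (x : ℂ)) := Complex.ofRealCLM.contDiff

lemma deriv_idC : deriv (fun x : ℝ => (x : ℂ)) = 1 := by
  funext x
  exact Complex.ofRealCLM.hasDerivAt.deriv

section Main

variable (G : Ω1 → Ω1 → A)
    (haddl : ∀ m m' n : Ω1, SmoothForm m → SmoothForm m' → SmoothForm n →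
      G (m + m') n = G m n + G m' n)
    (haddr : ∀ m n n' : Ω1, SmoothForm m → SmoothForm n → SmoothForm n' →
      G m (n + n') = G m n + G m n')
    (hleft : ∀ f : A, SmoothFn f → ∀ m n : Ω1, SmoothForm m → SmoothForm n →
      G (leftAct f m) n = f * G m n)
    (hmid : ∀ f : A, SmoothFn f → ∀ m n : Ω1, SmoothForm m → SmoothForm n →
      G (rightAct m f) n = G m (leftAct f n))
    (hright : ∀ f : A, SmoothFn f → ∀ m n : Ω1, SmoothForm m → SmoothForm n →
      G m (rightAct n f) = G m n * f)

include haddl haddr hleft hmid hright in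
lemma expand_aux (a b c d : A) (ha : SmoothFn a) (hb : SmoothFn b)
    (hc : SmoothFn c) (hd : SmoothFn d) :
    G (a, b) (c, d) =
      G dxF dxF * (a * c) + G dxF etaF * (a * d + 2 * deriv a * c)
      + G etaF dxF * (b * c) + G etaF etaF * (b * d + 2 * deriv b * c) := by
  have hsplit : (a, b) = rightAct dxF a + rightAct etaF b := by
    simp only [rightAct, dxF, etaF, Prod.mk_add_mk]
    refine Prod.ext ?_ ?_ <;> funext x <;> simp
  have hsplitn : ∀ u v : A, (u, v) = rightAct dxF u + rightAct etaF v := by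
    intro u v
    simp only [rightAct, dxF, etaF, Prod.mk_add_mk]
    refine Prod.ext ?_ ?_ <;> funext x <;> simp
  have sml1 : SmoothForm (rightAct dxF a) := smf (sf_mul sf_one ha) (sf_mul sf_zero ha)
  have sml2 : SmoothForm (rightAct etaF b) := smf (sf_mul sf_zero hb) (sf_mul sf_one hb)
  have smn : SmoothForm (c, d) := smf hc hd
  rw [hsplit, haddl _ _ _ sml1 sml2 smn, hmid a ha dxF (c, d) smf_dx smn,
    hmid b hb etaF (c, d) smf_eta smn]
  have h1 : leftAct a (c, d) = rightAct dxF (a * c) + rightAct etaF (a * d + 2 * deriv a * c) := by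
    rw [leftAct, hsplitn (a * c) (a * d + 2 * deriv a * c)]
  have h2 : leftAct b (c, d) = rightAct dxF (b * c) + rightAct etaF (b * d + 2 * deriv b * c) := by
    rw [leftAct, hsplitn (b * c) (b * d + 2 * deriv b * c)]
  have sac : SmoothFn (a * c) := sf_mul ha hc
  have sad : SmoothFn (a * d + 2 * deriv a * c) :=
    sf_add (sf_mul ha hd) (sf_mul (sf_mul sf_two (sf_deriv ha)) hc)
  have sbc : SmoothFn (b * c) := sf_mul hb hc
  have sbd : SmoothFn (b * d + 2 * deriv b * c) :=
    sf_add (sf_mul hb hd) (sf_mul (sf_mul sf_two (sf_deriv hb)) hc)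
  have smra : ∀ u : A, SmoothFn u → SmoothForm (rightAct dxF u) := fun u hu =>
    smf (sf_mul sf_one hu) (sf_mul sf_zero hu)
  have smre : ∀ u : A, SmoothFn u → SmoothForm (rightAct etaF u) := fun u hu =>
    smf (sf_mul sf_zero hu) (sf_mul sf_one hu)
  rw [h1, h2,
    haddr dxF _ _ smf_dx (smra _ sac) (smre _ sad),
    haddr etaF _ _ smf_eta (smra _ sbc) (smre _ sbd),
    hright _ sac dxF dxF smf_dx smf_dx,
    hright _ sad dxF etaF smf_dx smf_eta,
    hright _ sbc etaF dxF smf_eta smf_dx,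
    hright _ sbd etaF etaF smf_eta smf_eta]
  ring

include haddl haddr hleft hmid hright in
lemma eta_eta_aux : G etaF etaF = 0 := by
  have hx : SmoothFn (fun x : ℝ => (x : ℂ)) := sf_idC
  have hlx : leftAct (fun x : ℝ => (x : ℂ)) dxF = ((fun x : ℝ => (x : ℂ)), 2) := by
    simp only [leftAct, dxF, deriv_idC]
    refine Prod.ext ?_ ?_ <;> funext x <;> simp
  have h := hleft _ hx dxF etaF smf_dx smf_eta
  rw [hlx] at h
  have h' : G ((fun x : ℝ => (x : ℂ)), (2 : A)) (((0 : A)), ((1 : A))) =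
      (fun x : ℝ => (x : ℂ)) * G dxF etaF := h
  have he := expand_aux G haddl haddr hleft hmid hright
    (fun x : ℝ => (x : ℂ)) 2 0 1 hx sf_two sf_zero sf_one
  have key := he.symm.trans h'
  have hd2 : deriv (2 : A) = 0 := by funext x; exact deriv_const x 2
  rw [deriv_idC, hd2] at key
  funext x
  have hx' := congrFun key x
  simp only [Pi.add_apply, Pi.mul_apply, Pi.zero_apply, Pi.one_apply, Pi.ofNat_apply] at hx' ⊢
  push_cast at hx'
  linear_combination hx' / 2

include haddl haddr hleft hmid hright in
lemma eta_dx_aux : G etaF dxF = -G dxF etaF := by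
  have hx : SmoothFn (fun x : ℝ => (x : ℂ)) := sf_idC
  have hlx : leftAct (fun x : ℝ => (x : ℂ)) dxF = ((fun x : ℝ => (x : ℂ)), 2) := by
    simp only [leftAct, dxF, deriv_idC]
    refine Prod.ext ?_ ?_ <;> funext x <;> simp
  have h := hleft _ hx dxF dxF smf_dx smf_dx
  rw [hlx] at h
  have h' : G ((fun x : ℝ => (x : ℂ)), (2 : A)) (((1 : A)), ((0 : A))) =
      (fun x : ℝ => (x : ℂ)) * G dxF dxF := h
  have he := expand_aux G haddl haddr hleft hmid hright
    (fun x : ℝ => (x : ℂ)) 2 1 0 hx sf_two sf_one sf_zero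
  have key := he.symm.trans h'
  have hd2 : deriv (2 : A) = 0 := by funext x; exact deriv_const x 2
  rw [deriv_idC, hd2] at key
  funext x
  have hx' := congrFun key x
  simp only [Pi.add_apply, Pi.mul_apply, Pi.zero_apply, Pi.one_apply, Pi.neg_apply,
    Pi.ofNat_apply] at hx' ⊢
  push_cast at hx'
  linear_combination hx' / 2

end Main

/-- expansion of the scalar field action density
`G((dφ)*, dφ) = G(dx,dx)·conj(φ′)·φ′ + G(dx,η)·(conj(φ″)·φ′ + conj(φ′)·φ″)`. -/
theorem scalar_action_density (G : Ω1 → Ω1 → A)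
(haddl : ∀ m m' n : Ω1, SmoothForm m → SmoothForm m' → SmoothForm n →
      G (m + m') n = G m n + G m' n)
    (haddr : ∀ m n n' : Ω1, SmoothForm m → SmoothForm n → SmoothForm n' →
      G m (n + n') = G m n + G m n')
    (hleft : ∀ f : A, SmoothFn f → ∀ m n : Ω1, SmoothForm m → SmoothForm n →
      G (leftAct f m) n = f * G m n)
    (hmid : ∀ f : A, SmoothFn f → ∀ m n : Ω1, SmoothForm m → SmoothForm n →
      G (rightAct m f) n = G m (leftAct f n))
    (hright : ∀ f : A, SmoothFn f → ∀ m n : Ω1, SmoothForm m → SmoothForm n →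
      G m (rightAct n f) = G m n * f)
    (φ : A) (hφ : SmoothFn φ) :
    ∀ x : ℝ, G (star1 (d0 φ)) (d0 φ) x =
      G dxF dxF x * (starRingEnd ℂ) (deriv φ x) * deriv φ x +
      G dxF etaF x * ((starRingEnd ℂ) (deriv (deriv φ) x) * deriv φ x +
        (starRingEnd ℂ) (deriv φ x) * deriv (deriv φ) x) := by
  intro x
  have hstar : star1 (d0 φ) = (conjA (deriv φ), conjA (deriv (deriv φ))) := by
    simp only [star1, d0, deriv_conjA]
    refine Prod.ext rfl ?_
    funext y
    simp only [Pi.sub_apply, Pi.mul_apply, Pi.ofNat_apply]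
    ring
  have h1 : SmoothFn (deriv φ) := sf_deriv hφ
  have h2 : SmoothFn (deriv (deriv φ)) := sf_deriv h1
  rw [hstar, show d0 φ = (deriv φ, deriv (deriv φ)) from rfl,
    expand_aux G haddl haddr hleft hmid hright _ _ _ _ (sf_conj h1) (sf_conj h2) h1 h2,
    eta_eta_aux G haddl haddr hleft hmid hright,
    eta_dx_aux G haddl haddr hleft hmid hright,
    deriv_conjA]
  simp only [Pi.add_apply, Pi.mul_apply, Pi.neg_apply, Pi.zero_apply, Pi.ofNat_apply, conjA]
  ring
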